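/- In the auxiliary graph G_M* for a matching M, if there exists an M-alternating path from the contracted node u to a blocking/star node b(v), then G_M contains a blocking structure (an alternating cycle with a blocking edge, an alternating path joining two disjoint blocking edges, or an alternating path from an unmatched node to a blocking edge); hence M is not popular. -/

import Mathlib

open Finset
open scoped Classical

noncomputable section

/-- A (partial) matching on a graph, given as a symmetric partner function. -/
def IsMatchingOn {W : Type*} (H : SimpleGraph W) (f : W → Option W) : Prop :=
  (∀ v w, f v = some w → f w = some v) ∧ (∀ v w, f v = some w → H.Adj v w)

/-- Number of matched vertices of a partner function. -/
def msize {W : Type*} [Fintype W] (f : W → Option W) : ℕ :=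
  (Finset.univ.filter (fun x => f x ≠ none)).card

/-- f is a maximum-size matching on H. -/
def MaxMatchingOn {W : Type*} [Fintype W] (H : SimpleGraph W) (f : W → Option W) : Prop :=
  IsMatchingOn H f ∧ ∀ g, IsMatchingOn H g → msize g ≤ msize f

variable {V : Type*} [Fintype V] [DecidableEq V]

/-- Rank of a situation (partner or unmatched); smaller is better, being
unmatched is worst (any neighbor is preferred to being unmatched). -/
def rkv (rank : V → V → ℕ) (v : V) : Option V → WithTop ℕ
  | none => ⊤
  | some w => (rank v w : WithTop ℕ)

/-- vote of v comparing situation s to situation t: +1 if v prefers s, -1 if v prefers t. -/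
def vote (rank : V → V → ℕ) (v : V) (s t : Option V) : ℤ :=
  if rkv rank v s < rkv rank v t then 1 else if rkv rank v t < rkv rank v s then -1 else 0

variable (G : SimpleGraph V) (rank : V → V → ℕ)

/-- The preferences are strict (a linear order) on the neighbors of each node. -/
def StrictPrefs : Prop := ∀ u v w, G.Adj u v → G.Adj u w → rank u v = rank u w → v = w

/-- g is more popular than f : strictly more nodes prefer g than prefer f. -/
def MorePopular (g f : V → Option V) : Prop :=
  (Finset.univ.filter (fun v => rkv rank v (g v) < rkv rank v (f v))).card >
  (Finset.univ.filter (fun v => rkv rank v (f v) < rkv rank v (g v))).card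

/-- f is popular: no matching is more popular than f. -/
def PopularM (f : V → Option V) : Prop :=
  ∀ g, IsMatchingOn G g → ¬ MorePopular rank g f

/-- uv is a blocking edge for matching f. -/
def BlockingEdge (f : V → Option V) (u v : V) : Prop :=
  G.Adj u v ∧ f u ≠ some v ∧
    rkv rank u (some v) < rkv rank u (f u) ∧ rkv rank v (some u) < rkv rank v (f v)

/-- Vote based weight of an edge uv. -/
def wE (f : V → Option V) (u v : V) : ℤ :=
  vote rank u (some v) (f u) + vote rank v (some u) (f v)

/-- Vote based weight of the loop at u. -/
def wL (f : V → Option V) (u : V) : ℤ := if f u = none then 0 else -1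

/-- G_M : G minus the edges of weight -2. -/
def GMgraph (f : V → Option V) : SimpleGraph V where
  Adj u v := G.Adj u v ∧ wE rank f u v ≠ -2
  symm := by
    constructor
    intro u v h
    refine ⟨h.1.symm, ?_⟩
    have h2 := h.2
    simp only [wE] at h2 ⊢
    omega
  loopless := ⟨fun v h => G.loopless.irrefl v h.1⟩

/-- An M-alternating path p 0, p 1, ..., p n (n edges) in graph H with matching f. -/
def AltPath {W : Type*} (H : SimpleGraph W) (f : W → Option W) (p : ℕ → W) (n : ℕ) : Prop :=
  (∀ i j, i ≤ n → j ≤ n → p i = p j → i = j) ∧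
  (∀ i, i < n → H.Adj (p i) (p (i + 1))) ∧
  (∀ i, i + 1 < n → (f (p i) = some (p (i + 1)) ↔ ¬ f (p (i + 1)) = some (p (i + 2))))

/-- An M-alternating cycle p 0, ..., p n = p 0 (n edges, n even), with
matching edges at odd positions. -/
def AltCycle {W : Type*} (H : SimpleGraph W) (f : W → Option W) (p : ℕ → W) (n : ℕ) : Prop :=
  4 ≤ n ∧ Even n ∧ p n = p 0 ∧ (∀ i j, i < n → j < n → p i = p j → i = j) ∧
  (∀ i, i < n → H.Adj (p i) (p (i + 1))) ∧
  (∀ i, i < n → (f (p i) = some (p (i + 1)) ↔ Odd i))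

/-- Blocking structure (i): an alternating cycle in G_M with a blocking edge. -/
def StructI (f : V → Option V) : Prop :=
  ∃ (p : ℕ → V) (n : ℕ), AltCycle (GMgraph G rank f) f p n ∧
    ∃ i, i < n ∧ BlockingEdge G rank f (p i) (p (i + 1))

/-- Blocking structure (ii): an alternating path in G_M whose first and last
edges are two disjoint blocking edges. -/
def StructII (f : V → Option V) : Prop :=
  ∃ (p : ℕ → V) (n : ℕ), 3 ≤ n ∧ AltPath (GMgraph G rank f) f p n ∧
    BlockingEdge G rank f (p 0) (p 1) ∧ BlockingEdge G rank f (p (n - 1)) (p n)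

/-- Blocking structure (iii): an alternating path in G_M from an unmatched node
ending in a blocking edge. -/
def StructIII (f : V → Option V) : Prop :=
  ∃ (p : ℕ → V) (n : ℕ), 1 ≤ n ∧ AltPath (GMgraph G rank f) f p n ∧ f (p 0) = none ∧
    BlockingEdge G rank f (p (n - 1)) (p n)

/-- Vertex set of the auxiliary graph G_M^* : original nodes, blocking nodes b_v,
star nodes b_S (indexed by the middle node of the star), and the contracted node u. -/
abbrev Vstar (V : Type*) := V ⊕ V ⊕ V ⊕ Unit

def origV : V → Vstar V := Sum.inl
def bNodeV : V → Vstar V := fun v => Sum.inr (Sum.inl v)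
def sNodeV : V → Vstar V := fun v => Sum.inr (Sum.inr (Sum.inl v))
def uNode : Vstar V := Sum.inr (Sum.inr (Sum.inr ()))

/-- v is an endpoint of some blocking edge. -/
def IsBlockEnd (f : V → Option V) (v : V) : Prop := ∃ w, BlockingEdge G rank f v w

/-- v is a leaf node: incident to exactly one blocking edge. -/
def IsLeafNode (f : V → Option V) (v : V) : Prop := ∃! w, BlockingEdge G rank f v w

/-- v is a leaf of a star: a leaf node whose unique blocking neighbor z also has
another leaf node attached by a blocking edge. -/
def IsStarLeaf (f : V → Option V) (v : V) : Prop :=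
  IsLeafNode G rank f v ∧ ∃ z, BlockingEdge G rank f v z ∧
    ∃ v', v' ≠ v ∧ IsLeafNode G rank f v' ∧ BlockingEdge G rank f v' z

/-- The (unique) blocking neighbor of a leaf node. -/
def midOf (f : V → Option V) (v : V) : V :=
  if h : ∃ z, BlockingEdge G rank f v z then h.choose else v

/-- b(v): the auxiliary unmatched node attached to the blocking-edge endpoint v. -/
def bmap (f : V → Option V) (v : V) : Vstar V :=
  if IsStarLeaf G rank f v then sNodeV (midOf G rank f v) else bNodeV v

/-- Projection of an original node into G_M^*: unmatched nodes are contracted to u. -/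
def projV (f : V → Option V) (v : V) : Vstar V :=
  if f v = none then uNode else origV v

/-- Underlying (asymmetric) edge description of G_M^*. -/
def starRel (f : V → Option V) (x y : Vstar V) : Prop :=
  (∃ v w, (GMgraph G rank f).Adj v w ∧ ¬ BlockingEdge G rank f v w ∧
    x = projV f v ∧ y = projV f w) ∨
  (∃ v, IsBlockEnd G rank f v ∧ x = projV f v ∧ y = bmap G rank f v)

/-- The auxiliary graph G_M^*. -/
def GMstar (f : V → Option V) : SimpleGraph (Vstar V) where
  Adj x y := x ≠ y ∧ (starRel G rank f x y ∨ starRel G rank f y x)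
  symm := ⟨fun x y h => ⟨h.1.symm, h.2.symm⟩⟩
  loopless := ⟨fun x h => h.1 rfl⟩

/-- The matching M viewed in G_M^*. -/
def fstar (f : V → Option V) : Vstar V → Option (Vstar V)
  | Sum.inl v => (f v).map Sum.inl
  | _ => none

/-- The dual objective of LP2. -/
def dualObj (α : V → ℝ) (y : Finset V → ℝ) : ℝ :=
  (∑ v, α v) +
    ∑ Z ∈ Finset.univ.filter (fun Z : Finset V => Odd Z.card), ((Z.card - 1 : ℝ) / 2) * y Z

/-- Feasibility for LP2, the dual of the fractional matching LP with odd set constraints. -/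
def DualFeasible (f : V → Option V) (α : V → ℝ) (y : Finset V → ℝ) : Prop :=
  (∀ v w, G.Adj v w →
    (wE rank f v w : ℝ) ≤ α v + α w +
      ∑ Z ∈ Finset.univ.filter (fun Z : Finset V => Odd Z.card ∧ v ∈ Z ∧ w ∈ Z), y Z) ∧
  (∀ v, (wL f v : ℝ) ≤ α v) ∧ (∀ Z, 0 ≤ y Z)

/-- A feasible solution of LP1: a fractional matching of G~ (loops allowed)
satisfying the odd-set constraints.  `x v v` is the value of the loop at v. -/
def PrimalFeasible (x : V → V → ℝ) : Prop :=
  (∀ v w, x v w = x w v) ∧ (∀ v w, 0 ≤ x v w) ∧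
  (∀ v w, v ≠ w → ¬ G.Adj v w → x v w = 0) ∧
  (∀ v, ∑ w, x v w = 1) ∧
  (∀ Z : Finset V, Odd Z.card →
    (∑ v ∈ Z, ∑ w ∈ Z, if v ≠ w then x v w else 0) ≤ (Z.card - 1 : ℝ))

/-- The w_M-value of a fractional matching x of G~. -/
def primalVal (f : V → Option V) (x : V → V → ℝ) : ℝ :=
  (∑ v, ∑ w, if v ≠ w then (wE rank f v w : ℝ) * x v w else 0) / 2 +
    ∑ v, (wL f v : ℝ) * x v v

/-- A fractional matching of G~ (no odd-set constraints). -/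
def FracMatching (x : V → V → ℝ) : Prop :=
  (∀ v w, x v w = x w v) ∧ (∀ v w, 0 ≤ x v w) ∧
  (∀ v w, v ≠ w → ¬ G.Adj v w → x v w = 0) ∧ (∀ v, ∑ w, x v w = 1)

/-- f is fractional popular ("truly popular"): no fractional matching has positive w_M-value. -/
def FracPopular (f : V → Option V) : Prop :=
  ∀ x, FracMatching G x → primalVal rank f x ≤ 0

/-- x is missed by some maximum matching of H (x is in the Gallai-Edmonds set D). -/
def Exposable {W : Type*} [Fintype W] (H : SimpleGraph W) (x : W) : Prop :=
  ∃ g, MaxMatchingOn H g ∧ g x = none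

/-- Reachability inside the set P by a walk of H. -/
def ReachWithin {W : Type*} (H : SimpleGraph W) (P : W → Prop) (x y : W) : Prop :=
  ∃ (p : ℕ → W) (n : ℕ), p 0 = x ∧ p n = y ∧ (∀ i, i ≤ n → P (p i)) ∧ ∀ i, i < n → H.Adj (p i) (p (i + 1))

/-- X: nodes of G_M^* reachable from blocking or star nodes on an alternating path. -/
def ReachX (f : V → Option V) (x : Vstar V) : Prop :=
  ∃ (p : ℕ → Vstar V) (n : ℕ), AltPath (GMstar G rank f) (fstar f) p n ∧
    (∃ v, IsBlockEnd G rank f v ∧ p 0 = bmap G rank f v) ∧ p n = x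

/-- K is a connected component of G_M^*[X ∩ D]. -/
def IsCompXD (f : V → Option V) (K : Finset (Vstar V)) : Prop :=
  K.Nonempty ∧
  (∀ x ∈ K, ReachX G rank f x ∧ Exposable (GMstar G rank f) x) ∧
  (∀ x ∈ K, ∀ y, ReachX G rank f y → Exposable (GMstar G rank f) y →
    (GMstar G rank f).Adj x y → y ∈ K) ∧
  (∀ x ∈ K, ∀ y ∈ K,
    ReachWithin (GMstar G rank f) (fun z => ReachX G rank f z ∧ Exposable (GMstar G rank f) z) x y)

/-- The α of the dual witness constructed from the Gallai-Edmonds decomposition of G_M^*. -/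
def alphaGE (f : V → Option V) (v : V) : ℝ :=
  if ReachX G rank f (origV v) ∧ Exposable (GMstar G rank f) (origV v) then -1
  else if ReachX G rank f (origV v) ∧ ¬ Exposable (GMstar G rank f) (origV v) ∧
      (∃ y, Exposable (GMstar G rank f) y ∧ (GMstar G rank f).Adj (origV v) y) then 1
  else 0

/-- The odd set of original nodes arising from a component K of G_M^*[X∩D]:
original members of K, with a star-node root replaced by the middle node of its star. -/
def ZofK (K : Finset (Vstar V)) : Finset V :=
  Finset.univ.filter (fun v => origV v ∈ K ∨ sNodeV v ∈ K)

/-- The y of the dual witness constructed from the Gallai-Edmonds decomposition. -/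
def yGE (f : V → Option V) (Z : Finset V) : ℝ :=
  if ∃ K, IsCompXD G rank f K ∧ 3 ≤ K.card ∧ Z = ZofK K then 2 else 0

end


section Aux

variable {V : Type*} [Fintype V] [DecidableEq V] {G : SimpleGraph V} {rank : V → V → ℕ}
  {f : V → Option V}

lemma vote_one {v : V} {s t : Option V} (h : rkv rank v s < rkv rank v t) :
    vote rank v s t = 1 := by unfold vote; rw [if_pos h]

lemma vote_neg_le (v : V) (s t : Option V) : -1 ≤ vote rank v s t := by
  unfold vote; split_ifs <;> norm_num

lemma vote_le_one (v : V) (s t : Option V) : vote rank v s t ≤ 1 := by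
  unfold vote; split_ifs <;> norm_num

lemma vote_self (v : V) (s : Option V) : vote rank v s s = 0 := by
  unfold vote; rw [if_neg (lt_irrefl _), if_neg (lt_irrefl _)]

lemma vote_ne_zero (hM : IsMatchingOn G f) (hstrict : StrictPrefs G rank)
    {a b : V} (hadj : G.Adj a b) (hne : f a ≠ some b) :
    vote rank a (some b) (f a) ≠ 0 := by
  unfold vote
  cases hfa : f a with
  | none =>
      have h : rkv rank a (some b) < rkv rank a none := by
        simp only [rkv]; exact WithTop.coe_lt_top _
      rw [if_pos h]; norm_num
  | some c =>
      have hadj' : G.Adj a c := hM.2 a c hfa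
      have hcb : c ≠ b := fun h => hne (by rw [hfa, h])
      have hneq : rkv rank a (some b) ≠ rkv rank a (some c) := by
        simp only [rkv, Ne, Nat.cast_inj]
        intro h
        exact hcb (hstrict a b c hadj hadj' h).symm
      rcases lt_or_gt_of_ne hneq with h | h
      · rw [if_pos h]; norm_num
      · rw [if_neg (asymm h), if_pos h]; norm_num

lemma pair_votes_nonneg (hM : IsMatchingOn G f) (hstrict : StrictPrefs G rank)
    {a b : V} (hadj : (GMgraph G rank f).Adj a b) (hna : f a ≠ some b) (hnb : f b ≠ some a) :
    0 ≤ vote rank a (some b) (f a) + vote rank b (some a) (f b) := by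
  have h1 := vote_ne_zero hM hstrict hadj.1 hna
  have h2 := vote_ne_zero hM hstrict hadj.1.symm hnb
  have hw : wE rank f a b ≠ -2 := hadj.2
  have he : wE rank f a b = vote rank a (some b) (f a) + vote rank b (some a) (f b) := rfl
  have b1 := vote_neg_le (rank := rank) a (some b) (f a)
  have b2 := vote_neg_le (rank := rank) b (some a) (f b)
  have c1 := vote_le_one (rank := rank) a (some b) (f a)
  have c2 := vote_le_one (rank := rank) b (some a) (f b)
  rw [he] at hw
  omega

lemma blocking_vote_fst {a b : V} (h : BlockingEdge G rank f a b) :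
    vote rank a (some b) (f a) = 1 := vote_one h.2.2.1

lemma blocking_vote_snd {a b : V} (h : BlockingEdge G rank f a b) :
    vote rank b (some a) (f b) = 1 := vote_one h.2.2.2

lemma blocking_gm {a b : V} (h : BlockingEdge G rank f a b) :
    (GMgraph G rank f).Adj a b := by
  refine ⟨h.1, ?_⟩
  have he : wE rank f a b = vote rank a (some b) (f a) + vote rank b (some a) (f b) := rfl
  rw [he, blocking_vote_fst h, blocking_vote_snd h]
  norm_num

lemma blocking_symm (hM : IsMatchingOn G f) {a b : V} (h : BlockingEdge G rank f a b) :
    BlockingEdge G rank f b a :=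
  ⟨h.1.symm, fun hh => h.2.1 (hM.1 _ _ hh), h.2.2.2, h.2.2.1⟩

lemma morePopular_of_sum_pos {g : V → Option V}
    (h : 0 < ∑ x, vote rank x (g x) (f x)) : MorePopular rank g f := by
  have key : ∑ x, vote rank x (g x) (f x) =
      ((Finset.univ.filter (fun v => rkv rank v (g v) < rkv rank v (f v))).card : ℤ) -
      ((Finset.univ.filter (fun v => rkv rank v (f v) < rkv rank v (g v))).card : ℤ) := by
    rw [Finset.card_filter, Finset.card_filter]
    push_cast
    rw [← Finset.sum_sub_distrib]
    apply Finset.sum_congr rfl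
    intro x _
    unfold vote
    by_cases h1 : rkv rank x (g x) < rkv rank x (f x)
    · rw [if_pos h1, if_pos h1, if_neg (asymm h1)]; ring
    · rw [if_neg h1, if_neg h1]
      by_cases h2 : rkv rank x (f x) < rkv rank x (g x)
      · rw [if_pos h2, if_pos h2]; ring
      · rw [if_neg h2, if_neg h2]; ring
  rw [key] at h
  have := sub_pos.mp h
  exact_mod_cast this

lemma sum_range_pair (a : ℕ → ℤ) (K : ℕ) :
    ∑ i ∈ Finset.range (2*K), a i = ∑ k ∈ Finset.range K, (a (2*k) + a (2*k+1)) := by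
  induction K with
  | zero => simp
  | succ K ih =>
      rw [show 2*(K+1) = 2*K+1+1 by ring, Finset.sum_range_succ, Finset.sum_range_succ,
        Finset.sum_range_succ, ih, add_assoc]


lemma path_parity {q : ℕ → V} {m : ℕ} (hq : AltPath (GMgraph G rank f) f q m) (h0 : f (q 0) = none) :
    ∀ i, i < m → (f (q i) = some (q (i+1)) ↔ Odd i) := by
  intro i
  induction i with
  | zero => intro _; simp [h0, Nat.odd_iff]
  | succ i ih =>
      intro h
      have hi := ih (by omega)
      have halt := hq.2.2 i (by omega)
      rw [Nat.odd_add_one, ← hi]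
      tauto

/-- flip a matching along a path q 0 .. q m -/
noncomputable def flipP (q : ℕ → V) (m : ℕ) (f : V → Option V) : V → Option V := fun x =>
  if h : ∃ i, i ≤ m ∧ q i = x then
    (if Even (Classical.choose h) then some (q (Classical.choose h + 1))
     else some (q (Classical.choose h - 1)))
  else if f x = some (q m) then none else f x

lemma notPopular_of_path (hM : IsMatchingOn G f) (hstrict : StrictPrefs G rank)
    {q : ℕ → V} {m : ℕ} (hm : 1 ≤ m) (hq : AltPath (GMgraph G rank f) f q m)
    (h0 : f (q 0) = none) (hb : BlockingEdge G rank f (q (m-1)) (q m)) :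
    ¬ PopularM G rank f := by
  have hpar := path_parity hq h0
  obtain ⟨hinj, hadj, _⟩ := hq
  have hmodd : Odd m := by
    rcases Nat.even_or_odd m with he | ho
    · exfalso
      have h1 : m - 1 < m := by omega
      have hodd : Odd (m-1) := by
        rw [Nat.odd_iff]; rw [Nat.even_iff] at he; omega
      have h2 := (hpar (m-1) h1).mpr hodd
      rw [show m-1+1 = m by omega] at h2
      exact hb.2.1 h2
    · exact ho
  obtain ⟨K0, hK0⟩ := id hmodd
  have hmK : m + 1 = 2*(K0+1) := by omega
  set K := K0 + 1 with hKdef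
  have hidx : ∀ (x : V) (h : ∃ i, i ≤ m ∧ q i = x) (i : ℕ), i ≤ m → q i = x →
      Classical.choose h = i := by
    intro x h i him hqi
    have hs := Classical.choose_spec h
    exact hinj _ _ hs.1 him (hqi ▸ hs.2)
  set g : V → Option V := flipP q m f with hgdef
  have hgq : ∀ i, i ≤ m → g (q i) = (if Even i then some (q (i+1)) else some (q (i-1))) := by
    intro i hi
    have hex : ∃ j, j ≤ m ∧ q j = q i := ⟨i, hi, rfl⟩
    simp only [hgdef, flipP]
    rw [dif_pos hex, hidx (q i) hex i hi rfl]
  have hgoff : ∀ x, (¬ ∃ i, i ≤ m ∧ q i = x) →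
      g x = if f x = some (q m) then none else f x := by
    intro x hx
    simp only [hgdef, flipP]
    rw [dif_neg hx]
  have hpart_on : ∀ i, i < m → ∀ x, f (q i) = some x → ∃ j, j ≤ m ∧ q j = x := by
    intro i hi x hx
    rcases Nat.eq_zero_or_pos i with rfl | hi0
    · rw [h0] at hx; exact absurd hx.symm (Option.some_ne_none _)
    rcases Nat.even_or_odd i with hie | hio
    · have h1 : i - 1 < m := by omega
      have hodd : Odd (i-1) := by rw [Nat.odd_iff]; rw [Nat.even_iff] at hie; omega
      have h2 := (hpar _ h1).mpr hodd
      rw [show i-1+1 = i by omega] at h2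
      have h3 := hM.1 _ _ h2
      rw [hx] at h3
      exact ⟨i-1, by omega, (Option.some.inj h3).symm⟩
    · have h2 := (hpar i hi).mpr hio
      rw [hx] at h2
      exact ⟨i+1, by omega, (Option.some.inj h2).symm⟩
  have hgM : IsMatchingOn G g := by
    constructor
    · intro x y hxy
      by_cases hx : ∃ i, i ≤ m ∧ q i = x
      · obtain ⟨i, hi, rfl⟩ := hx
        rw [hgq i hi] at hxy
        by_cases hie : Even i
        · rw [if_pos hie] at hxy
          obtain rfl : y = q (i+1) := (Option.some.inj hxy).symm
          have hi1 : i + 1 ≤ m := by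
            rcases Nat.lt_or_ge i m with h | h
            · omega
            · exfalso
              have : i = m := by omega
              subst this
              exact (Nat.not_odd_iff_even.mpr hie) hmodd
          rw [hgq (i+1) hi1, if_neg (by rw [Nat.even_add_one]; exact not_not_intro hie)]
          simp
        · rw [if_neg hie] at hxy
          obtain rfl : y = q (i-1) := (Option.some.inj hxy).symm
          have hi0 : 1 ≤ i := by
            rcases Nat.eq_zero_or_pos i with rfl | h
            · exact absurd Even.zero hie
            · exact h
          have him : i - 1 ≤ m := by omega
          have hieven : Even (i-1) := by
            rw [Nat.even_iff]; rw [Nat.even_iff] at hie; omega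
          rw [hgq (i-1) him, if_pos hieven, show i-1+1 = i by omega]
      · rw [hgoff x hx] at hxy
        by_cases hfx : f x = some (q m)
        · rw [if_pos hfx] at hxy; exact absurd hxy.symm (Option.some_ne_none _)
        · rw [if_neg hfx] at hxy
          have hy : ¬ ∃ i, i ≤ m ∧ q i = y := by
            rintro ⟨i, hi, rfl⟩
            have hsym := hM.1 _ _ hxy
            rcases Nat.lt_or_ge i m with h | h
            · exact hx (hpart_on i h x hsym)
            · have : i = m := by omega
              subst this
              exact hfx (hM.1 _ _ hsym)
          rw [hgoff y hy]
          have hfy : f y = some x := hM.1 _ _ hxy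
          rw [if_neg (by
            intro hcon
            rw [hfy] at hcon
            exact hx ⟨m, le_rfl, (Option.some.inj hcon).symm⟩), hfy]
    · intro x y hxy
      by_cases hx : ∃ i, i ≤ m ∧ q i = x
      · obtain ⟨i, hi, rfl⟩ := hx
        rw [hgq i hi] at hxy
        by_cases hie : Even i
        · rw [if_pos hie] at hxy
          obtain rfl : y = q (i+1) := (Option.some.inj hxy).symm
          have hilt : i < m := by
            rcases Nat.lt_or_ge i m with h | h
            · exact h
            · exfalso
              have : i = m := by omega
              subst this
              exact (Nat.not_odd_iff_even.mpr hie) hmodd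
          exact (hadj i hilt).1
        · rw [if_neg hie] at hxy
          obtain rfl : y = q (i-1) := (Option.some.inj hxy).symm
          have hi0 : 1 ≤ i := by
            rcases Nat.eq_zero_or_pos i with rfl | h
            · exact absurd Even.zero hie
            · exact h
          have h1 : i - 1 < m := by omega
          have := (hadj (i-1) h1).1
          rw [show i-1+1 = i by omega] at this
          exact this.symm
      · rw [hgoff x hx] at hxy
        by_cases hfx : f x = some (q m)
        · rw [if_pos hfx] at hxy; exact absurd hxy.symm (Option.some_ne_none _)
        · rw [if_neg hfx] at hxy; exact hM.2 _ _ hxy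
  have hsum : 0 < ∑ x, vote rank x (g x) (f x) := by
    have hinjS : ∀ i ∈ Finset.range (m+1), ∀ j ∈ Finset.range (m+1), q i = q j → i = j := by
      intro i hi j hj hij
      exact hinj i j (by have := Finset.mem_range.mp hi; omega) (by
        have := Finset.mem_range.mp hj; omega) hij
    have hS : ∑ x ∈ (Finset.range (m+1)).image q, vote rank x (g x) (f x)
        = ∑ i ∈ Finset.range (m+1), vote rank (q i) (g (q i)) (f (q i)) :=
      Finset.sum_image hinjS
    have hoff : -1 ≤ ∑ x ∈ Finset.univ \ (Finset.range (m+1)).image q,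
        vote rank x (g x) (f x) := by
      set T := Finset.univ \ (Finset.range (m+1)).image q with hT
      have hnot : ∀ x ∈ T, ¬ ∃ i, i ≤ m ∧ q i = x := by
        rintro x hxT ⟨i, hi, rfl⟩
        exact (Finset.mem_sdiff.mp hxT).2
          (Finset.mem_image.mpr ⟨i, Finset.mem_range.mpr (by omega), rfl⟩)
      have hptwise : ∀ x ∈ T, (if f x = some (q m) then (-1:ℤ) else 0) ≤
          vote rank x (g x) (f x) := by
        intro x hxT
        rw [hgoff x (hnot x hxT)]
        by_cases hfx : f x = some (q m)
        · rw [if_pos hfx, if_pos hfx]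
          exact vote_neg_le x none (f x)
        · rw [if_neg hfx, if_neg hfx, vote_self]
      refine le_trans ?_ (Finset.sum_le_sum hptwise)
      rcases hfz : f (q m) with _ | z
      · have hz : ∀ x ∈ T, (if f x = some (q m) then (-1:ℤ) else 0) = 0 := by
          intro x _
          rw [if_neg]
          intro hcon
          have := hM.1 _ _ hcon
          rw [hfz] at this
          exact absurd this.symm (Option.some_ne_none _)
        rw [Finset.sum_congr rfl hz]
        norm_num
      · have hz : ∀ x ∈ T, (if f x = some (q m) then (-1:ℤ) else 0) =
            (if x = z then (-1:ℤ) else 0) := by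
          intro x _
          by_cases hx : f x = some (q m)
          · have h1 := hM.1 _ _ hx
            rw [hfz] at h1
            rw [if_pos hx, if_pos (Option.some.inj h1).symm]
          · rw [if_neg hx, if_neg]
            rintro rfl
            exact hx (hM.1 _ _ hfz)
        rw [Finset.sum_congr rfl hz, Finset.sum_ite_eq' T z (fun _ => (-1:ℤ))]
        split_ifs <;> norm_num
    have hon : 2 ≤ ∑ i ∈ Finset.range (m+1), vote rank (q i) (g (q i)) (f (q i)) := by
      rw [show m+1 = 2*K from hmK, sum_range_pair]
      have hterm : ∀ k ∈ Finset.range K, (if k = K - 1 then (2:ℤ) else 0) ≤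
          vote rank (q (2*k)) (g (q (2*k))) (f (q (2*k))) +
          vote rank (q (2*k+1)) (g (q (2*k+1))) (f (q (2*k+1))) := by
        intro k hk
        have hk' : k < K := Finset.mem_range.mp hk
        have h2k : 2*k ≤ m := by omega
        have h2k1 : 2*k+1 ≤ m := by omega
        rw [hgq _ h2k, if_pos (even_two_mul k), hgq _ h2k1,
          if_neg (show ¬ Even (2*k+1) by
            rw [Nat.even_add_one]; exact not_not_intro (even_two_mul k)),
          show 2*k+1-1 = 2*k from rfl]
        by_cases hkK : k = K - 1
        · rw [if_pos hkK]
          rw [show (2*k : ℕ) = m - 1 by omega, show m-1+1 = m by omega]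
          rw [blocking_vote_fst hb, blocking_vote_snd hb]
          norm_num
        · rw [if_neg hkK]
          have hlt : 2*k+1 < m := by omega
          refine pair_votes_nonneg hM hstrict (hadj _ (by omega)) ?_ ?_
          · intro hcon
            have := (hpar _ (by omega : 2*k < m)).mp hcon
            exact (Nat.not_odd_iff_even.mpr (even_two_mul k)) this
          · intro hcon
            have h2 := hM.1 _ _ hcon
            exact (Nat.not_odd_iff_even.mpr (even_two_mul k)) ((hpar _ (by omega)).mp h2)
      calc (2:ℤ) = ∑ k ∈ Finset.range K, (if k = K-1 then (2:ℤ) else 0) := by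
            rw [Finset.sum_ite_eq' (Finset.range K) (K-1) (fun _ => (2:ℤ)),
              if_pos (Finset.mem_range.mpr (by omega))]
        _ ≤ _ := Finset.sum_le_sum hterm
    have hsplit := Finset.sum_sdiff (f := fun x => vote rank x (g x) (f x))
      (Finset.subset_univ ((Finset.range (m+1)).image q))
    rw [hS] at hsplit
    omega
  intro hpop
  exact hpop g hgM (morePopular_of_sum_pos hsum)


/-- flip a matching along a cycle p 0 .. p n = p 0 -/
noncomputable def flipC (p : ℕ → V) (n : ℕ) (f : V → Option V) : V → Option V := fun x =>
  if h : ∃ i, i < n ∧ p i = x then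
    (if Even (Classical.choose h) then some (p (Classical.choose h + 1))
     else some (p (Classical.choose h - 1)))
  else f x

lemma notPopular_of_cycle (hM : IsMatchingOn G f) (hstrict : StrictPrefs G rank)
    {p : ℕ → V} {n : ℕ} (hc : AltCycle (GMgraph G rank f) f p n)
    {i0 : ℕ} (hi0 : i0 < n) (hbe : BlockingEdge G rank f (p i0) (p (i0+1))) :
    ¬ PopularM G rank f := by
  obtain ⟨hn4, hne, hpn, hinj, hadj, hmat⟩ := hc
  obtain ⟨K, hK⟩ := hne
  have hKn : n = 2*K := by omega
  have hi0e : Even i0 := by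
    rw [← Nat.not_odd_iff_even]
    intro ho
    exact hbe.2.1 ((hmat i0 hi0).mpr ho)
  have hi0lt : i0 + 1 < n := by
    rcases Nat.even_iff.mp hi0e with h
    rw [Nat.even_iff] at hi0e
    omega
  -- partner facts
  have hpodd : ∀ i, i < n → Odd i → f (p i) = some (p (i+1)) :=
    fun i h ho => (hmat i h).mpr ho
  have hp0 : f (p 0) = some (p (n-1)) := by
    have h1 : Odd (n-1) := by rw [Nat.odd_iff]; omega
    have h2 := hpodd (n-1) (by omega) h1
    rw [show n-1+1 = n by omega, hpn] at h2
    exact hM.1 _ _ h2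
  have hpevenpos : ∀ i, 0 < i → i < n → Even i → f (p i) = some (p (i-1)) := by
    intro i h0 hi hie
    have h1 : Odd (i-1) := by rw [Nat.odd_iff]; rw [Nat.even_iff] at hie; omega
    have h2 := hpodd (i-1) (by omega) h1
    rw [show i-1+1 = i by omega] at h2
    exact hM.1 _ _ h2
  have hidx : ∀ (x : V) (h : ∃ i, i < n ∧ p i = x) (i : ℕ), i < n → p i = x →
      Classical.choose h = i := by
    intro x h i him hqi
    have hs := Classical.choose_spec h
    exact hinj _ _ hs.1 him (hqi ▸ hs.2)
  set g : V → Option V := flipC p n f with hgdef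
  have hgq : ∀ i, i < n → g (p i) = (if Even i then some (p (i+1)) else some (p (i-1))) := by
    intro i hi
    have hex : ∃ j, j < n ∧ p j = p i := ⟨i, hi, rfl⟩
    simp only [hgdef, flipC]
    rw [dif_pos hex, hidx (p i) hex i hi rfl]
  have hgoff : ∀ x, (¬ ∃ i, i < n ∧ p i = x) → g x = f x := by
    intro x hx
    simp only [hgdef, flipC]
    rw [dif_neg hx]
  have hclose : ∀ i, i < n → ∀ x, f (p i) = some x → ∃ j, j < n ∧ p j = x := by
    intro i hi x hx
    rcases Nat.even_or_odd i with hie | hio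
    · rcases Nat.eq_zero_or_pos i with rfl | h0
      · rw [hp0] at hx
        exact ⟨n-1, by omega, (Option.some.inj hx)⟩
      · rw [hpevenpos i h0 hi hie] at hx
        exact ⟨i-1, by omega, Option.some.inj hx⟩
    · rw [hpodd i hi hio] at hx
      rcases Nat.lt_or_ge (i+1) n with h | h
      · exact ⟨i+1, h, Option.some.inj hx⟩
      · have : i + 1 = n := by omega
        refine ⟨0, by omega, ?_⟩
        rw [← hpn, ← this]
        exact Option.some.inj hx
  have hieven_lt : ∀ i, i < n → Even i → i + 1 < n := by
    intro i hi hie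
    rw [Nat.even_iff] at hie
    omega
  have hgM : IsMatchingOn G g := by
    constructor
    · intro x y hxy
      by_cases hx : ∃ i, i < n ∧ p i = x
      · obtain ⟨i, hi, rfl⟩ := hx
        rw [hgq i hi] at hxy
        by_cases hie : Even i
        · rw [if_pos hie] at hxy
          obtain rfl : y = p (i+1) := (Option.some.inj hxy).symm
          rw [hgq (i+1) (hieven_lt i hi hie),
            if_neg (show ¬ Even (i+1) by rw [Nat.even_add_one]; exact not_not_intro hie)]
          simp
        · rw [if_neg hie] at hxy
          obtain rfl : y = p (i-1) := (Option.some.inj hxy).symm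
          have hi0' : 1 ≤ i := by
            rcases Nat.eq_zero_or_pos i with rfl | h
            · exact absurd Even.zero hie
            · exact h
          have hieven : Even (i-1) := by
            rw [Nat.even_iff]; rw [Nat.even_iff] at hie; omega
          rw [hgq (i-1) (by omega), if_pos hieven, show i-1+1 = i by omega]
      · rw [hgoff x hx] at hxy
        have hy : ¬ ∃ i, i < n ∧ p i = y := by
          rintro ⟨i, hi, rfl⟩
          exact hx (hclose i hi x (hM.1 _ _ hxy))
        rw [hgoff y hy]
        exact hM.1 _ _ hxy
    · intro x y hxy
      by_cases hx : ∃ i, i < n ∧ p i = x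
      · obtain ⟨i, hi, rfl⟩ := hx
        rw [hgq i hi] at hxy
        by_cases hie : Even i
        · rw [if_pos hie] at hxy
          obtain rfl : y = p (i+1) := (Option.some.inj hxy).symm
          exact (hadj i hi).1
        · rw [if_neg hie] at hxy
          obtain rfl : y = p (i-1) := (Option.some.inj hxy).symm
          have hi0' : 1 ≤ i := by
            rcases Nat.eq_zero_or_pos i with rfl | h
            · exact absurd Even.zero hie
            · exact h
          have := (hadj (i-1) (by omega)).1
          rw [show i-1+1 = i by omega] at this
          exact this.symm
      · rw [hgoff x hx] at hxy
        exact hM.2 _ _ hxy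
  have hsum : 0 < ∑ x, vote rank x (g x) (f x) := by
    have hinjS : ∀ i ∈ Finset.range n, ∀ j ∈ Finset.range n, p i = p j → i = j := by
      intro i hi j hj hij
      exact hinj i j (Finset.mem_range.mp hi) (Finset.mem_range.mp hj) hij
    have hS : ∑ x ∈ (Finset.range n).image p, vote rank x (g x) (f x)
        = ∑ i ∈ Finset.range n, vote rank (p i) (g (p i)) (f (p i)) :=
      Finset.sum_image hinjS
    have hoff : (0:ℤ) ≤ ∑ x ∈ Finset.univ \ (Finset.range n).image p,
        vote rank x (g x) (f x) := by
      apply Finset.sum_nonneg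
      intro x hxT
      have hx : ¬ ∃ i, i < n ∧ p i = x := by
        rintro ⟨i, hi, rfl⟩
        exact (Finset.mem_sdiff.mp hxT).2
          (Finset.mem_image.mpr ⟨i, Finset.mem_range.mpr hi, rfl⟩)
      rw [hgoff x hx, vote_self]
    have hon : 2 ≤ ∑ i ∈ Finset.range n, vote rank (p i) (g (p i)) (f (p i)) := by
      rw [hKn, sum_range_pair]
      obtain ⟨k0, hk0⟩ : ∃ k0, i0 = 2*k0 := hi0e.exists_two_nsmul _ |>.imp (fun a ha => by
        simpa [two_nsmul, two_mul] using ha)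
      have hterm : ∀ k ∈ Finset.range K, (if k = k0 then (2:ℤ) else 0) ≤
          vote rank (p (2*k)) (g (p (2*k))) (f (p (2*k))) +
          vote rank (p (2*k+1)) (g (p (2*k+1))) (f (p (2*k+1))) := by
        intro k hk
        have hk' : k < K := Finset.mem_range.mp hk
        have h2k : 2*k < n := by omega
        have h2k1 : 2*k+1 < n := by omega
        rw [hgq _ h2k, if_pos (even_two_mul k), hgq _ h2k1,
          if_neg (show ¬ Even (2*k+1) by
            rw [Nat.even_add_one]; exact not_not_intro (even_two_mul k)),
          show 2*k+1-1 = 2*k from rfl]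
        by_cases hkk : k = k0
        · rw [if_pos hkk]
          subst hkk
          rw [← hk0]
          rw [blocking_vote_fst hbe, blocking_vote_snd hbe]
          norm_num
        · rw [if_neg hkk]
          refine pair_votes_nonneg hM hstrict (hadj _ h2k) ?_ ?_
          · intro hcon
            have := (hmat _ h2k).mp hcon
            exact (Nat.not_odd_iff_even.mpr (even_two_mul k)) this
          · intro hcon
            have h2 := hM.1 _ _ hcon
            exact (Nat.not_odd_iff_even.mpr (even_two_mul k)) ((hmat _ h2k).mp h2)
      calc (2:ℤ) = ∑ k ∈ Finset.range K, (if k = k0 then (2:ℤ) else 0) := by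
            rw [Finset.sum_ite_eq' (Finset.range K) k0 (fun _ => (2:ℤ)),
              if_pos (Finset.mem_range.mpr (by omega))]
        _ ≤ _ := Finset.sum_le_sum hterm
    have hsplit := Finset.sum_sdiff (f := fun x => vote rank x (g x) (f x))
      (Finset.subset_univ ((Finset.range n).image p))
    rw [hS] at hsplit
    omega
  intro hpop
  exact hpop g hgM (morePopular_of_sum_pos hsum)


lemma structIII_notPopular (hM : IsMatchingOn G f) (hstrict : StrictPrefs G rank)
    (h : StructIII G rank f) : ¬ PopularM G rank f := by
  obtain ⟨q, m, hm, hq, h0, hb⟩ := h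
  exact notPopular_of_path hM hstrict hm hq h0 hb

lemma structI_notPopular (hM : IsMatchingOn G f) (hstrict : StrictPrefs G rank)
    (h : StructI G rank f) : ¬ PopularM G rank f := by
  obtain ⟨p, n, hc, i, hi, hbe⟩ := h
  exact notPopular_of_cycle hM hstrict hc hi hbe

lemma fstar_eq_some {x y : Vstar V} (h : fstar f x = some y) :
    ∃ a b, x = origV a ∧ y = origV b ∧ f a = some b := by
  cases x with
  | inl a =>
      simp only [fstar] at h
      rcases Option.map_eq_some_iff.mp h with ⟨b, hb, rfl⟩
      exact ⟨a, b, rfl, rfl, hb⟩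
  | inr x => simp [fstar] at h

lemma fstar_uNode : fstar f (uNode : Vstar V) = none := rfl

lemma bmap_ne_projV (v c : V) : bmap G rank f v ≠ projV f c := by
  unfold bmap projV
  split_ifs <;> simp [sNodeV, bNodeV, uNode, origV]

lemma bmap_ne_uNode (v : V) : bmap G rank f v ≠ uNode := by
  unfold bmap
  split_ifs <;> simp [sNodeV, bNodeV, uNode]

lemma bmap_ne_origV (v c : V) : bmap G rank f v ≠ origV c := by
  unfold bmap
  split_ifs <;> simp [sNodeV, bNodeV, origV]

lemma projV_orig {c w : V} (h : projV f c = origV w) : c = w ∧ f c ≠ none := by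
  unfold projV at h
  split_ifs at h with hc
  · exact absurd h (by simp [uNode, origV])
  · exact ⟨Sum.inl.inj h, hc⟩

lemma projV_uNode' {c : V} (h : projV f c = uNode) : f c = none := by
  unfold projV at h
  split_ifs at h with hc
  · exact hc
  · exact absurd h (by simp [uNode, origV])

lemma star_adj_orig_orig {a b : V} (h : (GMstar G rank f).Adj (origV a) (origV b)) :
    (GMgraph G rank f).Adj a b := by
  rcases h.2 with h' | h' <;>
    rcases h' with ⟨v', w', hadj, _, hx, hy⟩ | ⟨c, _, hx, hy⟩
  · obtain ⟨rfl, -⟩ := projV_orig hx.symm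
    obtain ⟨rfl, -⟩ := projV_orig hy.symm
    exact hadj
  · exact absurd hy.symm (bmap_ne_origV _ _)
  · obtain ⟨rfl, -⟩ := projV_orig hx.symm
    obtain ⟨rfl, -⟩ := projV_orig hy.symm
    exact hadj.symm
  · exact absurd hy.symm (bmap_ne_origV _ _)

lemma star_adj_u_orig {b : V} (h : (GMstar G rank f).Adj uNode (origV b)) :
    ∃ a, f a = none ∧ (GMgraph G rank f).Adj a b := by
  rcases h.2 with h' | h' <;>
    rcases h' with ⟨v', w', hadj, _, hx, hy⟩ | ⟨c, _, hx, hy⟩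
  · obtain ⟨rfl, -⟩ := projV_orig hy.symm
    exact ⟨v', projV_uNode' hx.symm, hadj⟩
  · exact absurd hy.symm (bmap_ne_origV _ _)
  · obtain ⟨rfl, -⟩ := projV_orig hx.symm
    exact ⟨w', projV_uNode' hy.symm, hadj.symm⟩
  · exact absurd hy.symm (bmap_ne_uNode _)

lemma star_adj_orig_bmap {a v : V} (h : (GMstar G rank f).Adj (origV a) (bmap G rank f v)) :
    IsBlockEnd G rank f a := by
  rcases h.2 with h' | h' <;>
    rcases h' with ⟨v', w', hadj, _, hx, hy⟩ | ⟨c, hbe, hx, hy⟩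
  · exact absurd hy (bmap_ne_projV _ _)
  · obtain ⟨h1, -⟩ := projV_orig hx.symm
    exact h1 ▸ hbe
  · exact absurd hx (bmap_ne_projV _ _)
  · exact absurd hx (bmap_ne_projV _ _)

lemma star_adj_u_bmap {v : V} (h : (GMstar G rank f).Adj uNode (bmap G rank f v)) :
    ∃ c, f c = none ∧ IsBlockEnd G rank f c := by
  rcases h.2 with h' | h' <;>
    rcases h' with ⟨v', w', hadj, _, hx, hy⟩ | ⟨c, hbe, hx, hy⟩
  · exact absurd hy (bmap_ne_projV _ _)
  · exact ⟨c, projV_uNode' hx.symm, hbe⟩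
  · exact absurd hx (bmap_ne_projV _ _)
  · exact absurd hy.symm (bmap_ne_uNode _)

lemma star_path_interior (hM : IsMatchingOn G f) {p : ℕ → Vstar V} {n : ℕ}
    (hpath : AltPath (GMstar G rank f) (fstar f) p n) :
    ∀ j, 1 ≤ j → j < n → ∃ w, p j = origV w ∧ f w ≠ none := by
  intro j h1 h2
  by_cases hf : fstar f (p j) = none
  · exfalso
    have halt := hpath.2.2 (j-1) (by omega)
    rw [show j-1+1 = j by omega] at halt
    have hsome : fstar f (p (j-1)) = some (p j) :=
      halt.mpr (by rw [hf]; simp)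
    obtain ⟨a, b, _, hb, hab⟩ := fstar_eq_some hsome
    rw [hb] at hf
    have hba : f b = some a := hM.1 _ _ hab
    simp [fstar, origV, hba] at hf
  · cases hj : p j with
    | inl w =>
        refine ⟨w, rfl, ?_⟩
        rw [hj] at hf
        intro hw
        exact hf (by simp [fstar, hw])
    | inr z =>
        rw [hj] at hf
        exact absurd rfl hf

lemma structIII_of_unmatched_blocking {x y : V} (hx : f x = none)
    (hbe : BlockingEdge G rank f x y) : StructIII G rank f := by
  refine ⟨fun i => if i = 0 then x else y, 1, le_rfl, ⟨?_, ?_, ?_⟩, by simpa using hx, ?_⟩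
  · intro i j hi hj heq
    interval_cases i <;> interval_cases j
    · rfl
    · exact absurd (by simpa using heq) hbe.1.ne
    · exact absurd (by simpa using heq) hbe.1.ne'
    · rfl
  · intro i hi
    interval_cases i
    simpa using blocking_gm hbe
  · intro i hi
    omega
  · simpa using hbe

lemma build_structIII (hM : IsMatchingOn G f)
    {a T : V} {w : ℕ → V} {s : ℕ} (hs2 : 2 ≤ s) (hse : Even s)
    (hA : f a = none)
    (hTm : f T ≠ none)
    (hwm : ∀ k, 1 ≤ k → k ≤ s → f (w k) ≠ none)
    (hwinj : ∀ k l, 1 ≤ k → k ≤ s → 1 ≤ l → l ≤ s → w k = w l → k = l)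
    (hTw : ∀ k, 1 ≤ k → k ≤ s → T ≠ w k)
    (hadj1 : (GMgraph G rank f).Adj a (w 1))
    (hadjW : ∀ k, 1 ≤ k → k ≤ s-1 → (GMgraph G rank f).Adj (w k) (w (k+1)))
    (hpar : ∀ k, 1 ≤ k → k ≤ s-1 → (f (w k) = some (w (k+1)) ↔ Odd k))
    (hbT : BlockingEdge G rank f (w s) T) :
    StructIII G rank f := by
  set q : ℕ → V := fun i => if i = 0 then a else if i ≤ s then w i else T with hqdef
  have hq0 : q 0 = a := by simp [hqdef]
  have hqw : ∀ k, 1 ≤ k → k ≤ s → q k = w k := by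
    intro k h1 h2
    simp only [hqdef]
    rw [if_neg (by omega), if_pos h2]
  have hqT : ∀ k, s < k → q k = T := by
    intro k h1
    simp only [hqdef]
    rw [if_neg (by omega), if_neg (by omega)]
  have haw : ∀ k, 1 ≤ k → k ≤ s → a ≠ w k := by
    intro k h1 h2 hcon
    exact hwm k h1 h2 (hcon ▸ hA)
  refine ⟨q, s+1, by omega, ⟨?_, ?_, ?_⟩, by rw [hq0]; exact hA, ?_⟩
  · -- injectivity
    intro i j hi hj heq
    have hcl : ∀ k, k ≤ s + 1 → k = 0 ∨ (1 ≤ k ∧ k ≤ s) ∨ k = s+1 := by intro k hk; omega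
    rcases hcl i hi with rfl | hi' | rfl <;> rcases hcl j hj with rfl | hj' | rfl
    · rfl
    · rw [hq0, hqw j hj'.1 hj'.2] at heq
      exact absurd heq (haw j hj'.1 hj'.2)
    · rw [hq0, hqT _ (by omega)] at heq
      exact absurd (heq ▸ hA) hTm
    · rw [hq0, hqw i hi'.1 hi'.2] at heq
      exact absurd heq.symm (haw i hi'.1 hi'.2)
    · rw [hqw i hi'.1 hi'.2, hqw j hj'.1 hj'.2] at heq
      exact hwinj i j hi'.1 hi'.2 hj'.1 hj'.2 heq
    · rw [hqw i hi'.1 hi'.2, hqT _ (by omega)] at heq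
      exact absurd heq.symm (hTw i hi'.1 hi'.2)
    · rw [hqT _ (by omega), hq0] at heq
      exact absurd hA (heq ▸ hTm)
    · rw [hqT _ (by omega), hqw j hj'.1 hj'.2] at heq
      exact absurd heq (hTw j hj'.1 hj'.2)
    · rfl
  · -- adjacency
    intro i hi
    rcases Nat.eq_zero_or_pos i with rfl | hi0
    · rw [hq0, hqw 1 le_rfl (by omega)]
      exact hadj1
    rcases Nat.lt_or_ge i s with his | his
    · rw [hqw i hi0 (by omega), hqw (i+1) (by omega) (by omega)]
      exact hadjW i hi0 (by omega)
    · have : i = s := by omega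
      subst this
      rw [hqw i hi0 le_rfl, hqT _ (by omega)]
      exact blocking_gm hbT
  · -- alternation
    intro i hi
    rcases Nat.eq_zero_or_pos i with rfl | hi0
    · rw [hq0, hqw 1 le_rfl (by omega), hqw 2 (by omega) (by omega)]
      have h1 : f (w 1) = some (w 2) := (hpar 1 le_rfl (by omega)).mpr odd_one
      constructor
      · intro hcon; exact absurd hcon (by rw [hA]; simp)
      · intro hcon; exact absurd h1 hcon
    rcases Nat.lt_or_ge i (s-1) with his | his
    · rw [hqw i hi0 (by omega), hqw (i+1) (by omega) (by omega),
        hqw (i+2) (by omega) (by omega)]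
      rw [hpar i hi0 (by omega), hpar (i+1) (by omega) (by omega), Nat.odd_add_one]
      tauto
    · have : i = s - 1 := by omega
      subst this
      rw [hqw (s-1) hi0 (by omega), hqw (s-1+1) (by omega) (by omega),
        hqT (s-1+2) (by omega)]
      have hL : f (w (s-1)) = some (w (s-1+1)) :=
        (hpar (s-1) hi0 le_rfl).mpr (by rw [Nat.odd_iff]; rw [Nat.even_iff] at hse; omega)
      have hR : ¬ f (w (s-1+1)) = some T := by
        rw [show s-1+1 = s by omega]
        exact hbT.2.1
      exact iff_of_true hL hR
  · -- blocking at end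
    rw [show s+1-1 = s by omega, hqw s (by omega) le_rfl, hqT (s+1) (by omega)]
    exact hbT

lemma build_structI (hM : IsMatchingOn G f)
    {w : ℕ → V} {j e : ℕ} (hjo : Odd j) (hee : Even e) (hle : j + 3 ≤ e)
    (hwinj : ∀ k l, j ≤ k → k ≤ e → j ≤ l → l ≤ e → w k = w l → k = l)
    (hadjW : ∀ k, j ≤ k → k ≤ e-1 → (GMgraph G rank f).Adj (w k) (w (k+1)))
    (hpar : ∀ k, j ≤ k → k ≤ e-1 → (f (w k) = some (w (k+1)) ↔ Odd k))
    (hbe : BlockingEdge G rank f (w e) (w j)) :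
    StructI G rank f := by
  have hj1 : 1 ≤ j := hjo.pos
  set L := e - j + 1 with hLdef
  set c : ℕ → V := fun k => if k = 0 then w e else w (j+k-1) with hcdef
  have hc0 : c 0 = w e := by simp [hcdef]
  have hck : ∀ k, 1 ≤ k → c k = w (j+k-1) := by
    intro k h1
    simp only [hcdef]
    rw [if_neg (by omega)]
  have hoj : Odd j := hjo
  have hfe : f (w e) = some (w (e-1)) := by
    have h1 : Odd (e-1) := by
      rw [Nat.odd_iff]; rw [Nat.even_iff] at hee; omega
    have h2 := (hpar (e-1) (by omega) (by omega)).mpr h1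
    rw [show e-1+1 = e by omega] at h2
    exact hM.1 _ _ h2
  refine ⟨c, L, ⟨by omega, ?_, ?_, ?_, ?_, ?_⟩, 0, by omega, ?_⟩
  · -- Even L
    rw [Nat.even_iff]
    rw [Nat.even_iff] at hee
    rw [Nat.odd_iff] at hoj
    omega
  · -- c L = c 0
    rw [hc0, hck L (by omega), show j + L - 1 = e by omega]
  · -- injectivity
    intro k l hk hl heq
    have hcl : ∀ x, x < L → x = 0 ∨ (1 ≤ x ∧ x ≤ L - 1) := by intro x hx; omega
    rcases hcl k hk with rfl | hk' <;> rcases hcl l hl with rfl | hl'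
    · rfl
    · rw [hc0, hck l hl'.1] at heq
      have := hwinj e (j+l-1) (by omega) le_rfl (by omega) (by omega) heq
      omega
    · rw [hc0, hck k hk'.1] at heq
      have := hwinj (j+k-1) e (by omega) (by omega) (by omega) le_rfl heq
      omega
    · rw [hck k hk'.1, hck l hl'.1] at heq
      have := hwinj (j+k-1) (j+l-1) (by omega) (by omega) (by omega) (by omega) heq
      omega
  · -- adjacency
    intro k hk
    rcases Nat.eq_zero_or_pos k with rfl | hk0
    · rw [hc0, hck 1 le_rfl, show j+1-1 = j from rfl]
      exact (blocking_gm hbe)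
    · rw [hck k hk0, hck (k+1) (by omega), show j+(k+1)-1 = (j+k-1)+1 by omega]
      exact hadjW (j+k-1) (by omega) (by omega)
  · -- matching parity
    intro k hk
    rcases Nat.eq_zero_or_pos k with rfl | hk0
    · rw [hc0, hck 1 le_rfl, show j+1-1 = j from rfl]
      constructor
      · intro hcon
        rw [hfe] at hcon
        have := hwinj (e-1) j (by omega) (by omega) le_rfl (by omega)
          (Option.some.inj hcon)
        omega
      · intro hcon
        exact absurd hcon (by simp [Nat.odd_iff])
    · rw [hck k hk0, hck (k+1) (by omega), show j+(k+1)-1 = (j+k-1)+1 by omega]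
      rw [hpar (j+k-1) (by omega) (by omega)]
      rw [Nat.odd_iff, Nat.odd_iff]
      rw [Nat.odd_iff] at hoj
      omega
  · -- blocking edge at 0
    rw [hc0, hck 1 le_rfl, show j+1-1 = j from rfl]
    exact hbe

end Aux

/-- an alternating path in G_M^* from the contracted node u to a
blocking/star node b(v) yields a blocking structure in G_M; hence M is not popular. -/
theorem altpath_u_to_bnode_not_popular {V : Type*} [Fintype V] [DecidableEq V]
    (G : SimpleGraph V) (rank : V → V → ℕ) (hstrict : StrictPrefs G rank)
    (f : V → Option V) (hM : IsMatchingOn G f)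
    (p : ℕ → Vstar V) (n : ℕ)
    (hpath : AltPath (GMstar G rank f) (fstar f) p n)
    (v : V) (hv : IsBlockEnd G rank f v)
    (h0 : p 0 = uNode) (hn : p n = bmap G rank f v) :
    (StructI G rank f ∨ StructII G rank f ∨ StructIII G rank f) ∧
      ¬ PopularM G rank f := by
  classical
  have hn0 : 0 < n := by
    rcases Nat.eq_zero_or_pos n with rfl | h
    · exact absurd (h0.symm.trans hn).symm (bmap_ne_uNode v)
    · exact h
  by_cases hn1 : n = 1
  · subst hn1
    have hadj01 : (GMstar G rank f).Adj (p 0) (p 1) := hpath.2.1 0 (by omega)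
    rw [h0, hn] at hadj01
    obtain ⟨c, hc, u0, hu0⟩ := star_adj_u_bmap hadj01
    have hst := structIII_of_unmatched_blocking hc hu0
    exact ⟨Or.inr (Or.inr hst), structIII_notPopular hM hstrict hst⟩
  have hInt := star_path_interior hM hpath
  have hwch : ∀ j, ∃ wj : V, 1 ≤ j → j < n → p j = origV wj ∧ f wj ≠ none := by
    intro j
    by_cases h : 1 ≤ j ∧ j < n
    · obtain ⟨wj, h1, h2⟩ := hInt j h.1 h.2
      exact ⟨wj, fun _ _ => ⟨h1, h2⟩⟩
    · exact ⟨v, fun ha hb => absurd ⟨ha, hb⟩ h⟩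
  choose w hwspec using hwch
  have hporig : ∀ j, 1 ≤ j → j < n → p j = origV (w j) := fun j a b => (hwspec j a b).1
  have hwm : ∀ j, 1 ≤ j → j < n → f (w j) ≠ none := fun j a b => (hwspec j a b).2
  have hwinj : ∀ i j, 1 ≤ i → i < n → 1 ≤ j → j < n → w i = w j → i = j := by
    intro i j hi1 hi2 hj1 hj2 heq
    apply hpath.1 i j (by omega) (by omega)
    rw [hporig i hi1 hi2, hporig j hj1 hj2, heq]
  have hn2 : n ≠ 2 := by
    rintro rfl
    have halt := hpath.2.2 0 (by omega)
    have hL : ¬ fstar f (p 0) = some (p 1) := by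
      rw [h0, fstar_uNode]; simp
    have hR : fstar f (p 1) = some (p 2) := by
      by_contra hcon
      exact hL (halt.mpr hcon)
    obtain ⟨a, b, _, hy, _⟩ := fstar_eq_some hR
    rw [hn] at hy
    exact bmap_ne_origV v b hy
  have hn3 : 3 ≤ n := by omega
  have htrans : ∀ j, 1 ≤ j → j + 1 < n →
      (fstar f (p j) = some (p (j+1)) ↔ f (w j) = some (w (j+1))) := by
    intro j h1 h2
    rw [hporig j h1 (by omega), hporig (j+1) (by omega) h2]
    constructor
    · intro hcon
      obtain ⟨a', b', ha', hb', hab⟩ := fstar_eq_some hcon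
      obtain rfl : w j = a' := Sum.inl.inj ha'
      obtain rfl : w (j+1) = b' := Sum.inl.inj hb'
      exact hab
    · intro hcon
      simp [fstar, origV, hcon]
  have hparW : ∀ j, 1 ≤ j → j ≤ n-2 → (f (w j) = some (w (j+1)) ↔ Odd j) := by
    intro j
    induction j with
    | zero => intro h1 _; omega
    | succ j ih =>
        intro h1 h2
        rcases Nat.eq_zero_or_pos j with rfl | hj0
        · have halt := hpath.2.2 0 (by omega)
          have hL : ¬ fstar f (p 0) = some (p 1) := by
            rw [h0, fstar_uNode]; simp
          have hR : fstar f (p 1) = some (p (1+1)) := by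
            by_contra hcon
            exact hL (halt.mpr hcon)
          have h3 := (htrans 1 le_rfl (by omega)).mp hR
          exact iff_of_true h3 odd_one
        · have hih := ih (by omega) (by omega)
          have halt := hpath.2.2 j (by omega)
          rw [htrans j (by omega) (by omega), htrans (j+1) (by omega) (by omega)] at halt
          rw [Nat.odd_add_one, ← hih]
          tauto
  have hlast : (GMstar G rank f).Adj (p (n-1)) (p (n-1+1)) := hpath.2.1 (n-1) (by omega)
  rw [show n-1+1 = n by omega, hn, hporig (n-1) (by omega) (by omega)] at hlast
  have hbend : IsBlockEnd G rank f (w (n-1)) := star_adj_orig_bmap hlast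
  obtain ⟨u', hu'⟩ := hbend
  have hnodd : Odd n := by
    have halt := hpath.2.2 (n-2) (by omega)
    rw [show n-2+1 = n-1 by omega, show n-2+2 = n by omega] at halt
    have hR : ¬ fstar f (p (n-1)) = some (p n) := by
      intro hcon
      obtain ⟨a', b', _, hy, _⟩ := fstar_eq_some hcon
      rw [hn] at hy
      exact bmap_ne_origV v b' hy
    have hL : fstar f (p (n-2)) = some (p (n-1)) := halt.mpr hR
    have h3 : f (w (n-2)) = some (w (n-2+1)) := (htrans (n-2) (by omega) (by omega)).mp
      (by rw [show n-2+1 = n-1 by omega]; exact hL)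
    have h4 : Odd (n-2) := (hparW (n-2) (by omega) le_rfl).mp h3
    rw [Nat.odd_iff] at h4 ⊢
    omega
  have hadj0 : (GMstar G rank f).Adj (p 0) (p 1) := hpath.2.1 0 (by omega)
  rw [h0, hporig 1 le_rfl (by omega)] at hadj0
  obtain ⟨a, ha, hadja⟩ := star_adj_u_orig hadj0
  have hadjW : ∀ k, 1 ≤ k → k ≤ n-2 → (GMgraph G rank f).Adj (w k) (w (k+1)) := by
    intro k h1 h2
    have h3 : (GMstar G rank f).Adj (p k) (p (k+1)) := hpath.2.1 k (by omega)
    rw [hporig k h1 (by omega), hporig (k+1) (by omega) (by omega)] at h3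
    exact star_adj_orig_orig h3
  by_cases hum : f u' = none
  · have hst := structIII_of_unmatched_blocking hum (blocking_symm hM hu')
    exact ⟨Or.inr (Or.inr hst), structIII_notPopular hM hstrict hst⟩
  by_cases hcol : ∃ j, 1 ≤ j ∧ j ≤ n-1 ∧ w j = u'
  · obtain ⟨j, hj1, hj2, hju⟩ := hcol
    have hjne : j ≠ n-1 := by
      rintro rfl
      exact hu'.1.ne hju
    have hj2' : j ≤ n-2 := by omega
    rcases Nat.even_or_odd j with hje | hjo
    · have hj2'' : 2 ≤ j := by rw [Nat.even_iff] at hje; omega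
      have hbT : BlockingEdge G rank f (w j) (w (n-1)) := by
        rw [hju]; exact blocking_symm hM hu'
      have hst : StructIII G rank f := build_structIII (a := a) (T := w (n-1))
        (w := w) (s := j) hM hj2'' hje ha
        (hwm (n-1) (by omega) (by omega))
        (fun k hk1 hk2 => hwm k hk1 (by omega))
        (fun k l hk1 hk2 hl1 hl2 => hwinj k l hk1 (by omega) hl1 (by omega))
        (fun k hk1 hk2 hcon => by
          have := hwinj (n-1) k (by omega) (by omega) hk1 (by omega) hcon
          omega)
        hadja
        (fun k hk1 hk2 => hadjW k hk1 (by omega))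
        (fun k hk1 hk2 => hparW k hk1 (by omega))
        hbT
      exact ⟨Or.inr (Or.inr hst), structIII_notPopular hM hstrict hst⟩
    · have hjn2 : j ≠ n-2 := by
        rintro rfl
        have h1 : f (w (n-2)) = some (w (n-2+1)) :=
          (hparW (n-2) (by omega) le_rfl).mpr hjo
        have h2 := hM.1 _ _ h1
        rw [show n-2+1 = n-1 by omega] at h2
        exact hu'.2.1 (by rw [← hju]; exact h2)
      have hle : j + 3 ≤ n - 1 := by
        rw [Nat.odd_iff] at hjo hnodd
        omega
      have hbe2 : BlockingEdge G rank f (w (n-1)) (w j) := by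
        rw [hju]; exact hu'
      have hst : StructI G rank f := build_structI (w := w) (j := j) (e := n-1) hM hjo
        (by rw [Nat.even_iff]; rw [Nat.odd_iff] at hnodd; omega)
        hle
        (fun k l hk1 hk2 hl1 hl2 => hwinj k l (by omega) (by omega) (by omega) (by omega))
        (fun k hk1 hk2 => hadjW k (by omega) (by omega))
        (fun k hk1 hk2 => hparW k (by omega) (by omega))
        hbe2
      exact ⟨Or.inl hst, structI_notPopular hM hstrict hst⟩
  · have hst : StructIII G rank f := build_structIII (a := a) (T := u')
      (w := w) (s := n-1) hM (by omega)
      (by rw [Nat.even_iff]; rw [Nat.odd_iff] at hnodd; omega) ha hum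
      (fun k hk1 hk2 => hwm k hk1 (by omega))
      (fun k l hk1 hk2 hl1 hl2 => hwinj k l hk1 (by omega) hl1 (by omega))
      (fun k hk1 hk2 hcon => hcol ⟨k, hk1, hk2, hcon.symm⟩)
      hadja
      (fun k hk1 hk2 => hadjW k hk1 (by omega))
      (fun k hk1 hk2 => hparW k hk1 (by omega))
      hu'
    exact ⟨Or.inr (Or.inr hst), structIII_notPopular hM hstrict hst⟩
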